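/- arXiv:1609.03511 — 3 statements merged into one kernel-verified Lean document; each statement's English description precedes it below -/
import Mathlib

section
/- Let k be a positive integer, let c₁, c₂ ∈ (0,∞)^k with c₁ ≠ c₂, and let p₁, p₂ > 0. Then there are a constant c > 0 and N such that for all n ≥ N, ∑_{x ∈ ℤ₊^k} min{𝒫_{ln(n)·c₁}(x)·p₁, 𝒫_{ln(n)·c₂}(x)·p₂} ≥ c · n^{−D₊(c₁,c₂)} · (ln n)^{−k/2}. -/
/-!
Let `t ∈ [0,1]` be a zero of the derivative of the Chernoff exponent
`g(t) = ∑ᵢ (t c₁ᵢ + (1-t) c₂ᵢ - c₁ᵢ^t c₂ᵢ^(1-t))`; it exists by the intermediate value theorem,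
since the derivative is `∑ᵢ KL(c₂ᵢ ‖ c₁ᵢ) ≥ 0` at `0` and `-∑ᵢ KL(c₁ᵢ ‖ c₂ᵢ) ≤ 0` at `1`.
For the geometric mean `a = c₁^t c₂^(1-t)` both Poisson divergences `∑ᵢ KL(aᵢ ‖ c_jᵢ)` then equal
`g(t) ≤ D₊`. By Stirling's bound `m! ≤ e √m (m/e)^m`, the single lattice point `⌊ln n · a⌋`
alone carries mass `≳ exp(-ln n · ∑ᵢ KL(aᵢ ‖ c_jᵢ)) (ln n)^(-k/2) ≥ n^(-D₊) (ln n)^(-k/2)` under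
both distributions.
-/

open scoped BigOperators

/-- The multivariate Poisson probability mass function with mean vector `lam`. -/
noncomputable def mvPoisson {k : ℕ} (lam : Fin k → ℝ) (x : Fin k → ℕ) : ℝ :=
  ∏ i, lam i ^ (x i) * Real.exp (-lam i) / (Nat.factorial (x i) : ℝ)

/-- The Chernoff–Hellinger divergence
`D₊(c₁,c₂) = max_{t∈[0,1]} ∑ᵢ (t c₁(i) + (1-t) c₂(i) - c₁(i)^t c₂(i)^{1-t})`. -/
noncomputable def Dplus {k : ℕ} (c₁ c₂ : Fin k → ℝ) : ℝ :=
  sSup ((fun t : ℝ => ∑ i, (t * c₁ i + (1 - t) * c₂ i - c₁ i ^ t * c₂ i ^ (1 - t))) ''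
    Set.Icc (0 : ℝ) 1)

open Real Filter
open scoped Nat

theorem Stirling.factorial_le_exp_one_mul_sqrt_mul_pow {n : ℕ} (hn : n ≠ 0) :
    (n ! : ℝ) ≤ exp 1 * √n * (n / exp 1) ^ n := by
  have hseq : stirlingSeq n ≤ exp 1 / √2 := by
    obtain ⟨m, rfl⟩ := Nat.exists_eq_succ_of_ne_zero hn
    exact stirlingSeq_one ▸ stirlingSeq'_antitone (Nat.zero_le m)
  have hpos : 0 < √(2 * n) * (n / exp 1) ^ n := by positivity
  calc (n ! : ℝ) = stirlingSeq n * (√(2 * n) * (n / exp 1) ^ n) := by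
        rw [stirlingSeq, div_mul_cancel₀ _ hpos.ne']
    _ ≤ exp 1 / √2 * (√(2 * n) * (n / exp 1) ^ n) := by gcongr
    _ = exp 1 * √n * (n / exp 1) ^ n := by
        rw [sqrt_mul zero_le_two]
        field_simp

/-- `KL(Poisson(a) ‖ Poisson(b))`. -/
noncomputable def poissonKL (a b : ℝ) : ℝ := a * log (a / b) - a + b

lemma poissonKL_nonneg {a b : ℝ} (ha : 0 < a) (hb : 0 < b) : 0 ≤ poissonKL a b := by
  have h := mul_le_mul_of_nonneg_left (log_le_sub_one_of_pos (div_pos hb ha)) ha.le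
  rw [log_div hb.ne' ha.ne', show a * (b / a - 1) = b - a by field_simp] at h
  rw [poissonKL, log_div ha.ne' hb.ne']
  linarith

lemma exp_neg_poissonKL_div_le {μ : ℝ} (hμ : 0 < μ) {m : ℕ} (hm : m ≠ 0) :
    exp (-poissonKL m μ) / (exp 1 * √m) ≤ μ ^ m * exp (-μ) / m ! := by
  have hm' : (0 : ℝ) < m := by positivity
  calc exp (-poissonKL m μ) / (exp 1 * √m)
      = μ ^ m * exp (-μ) / (exp 1 * √m * (m / exp 1) ^ m) := by
        rw [show -poissonKL m μ = m * log μ + -μ - m * (log m - 1) by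
            rw [poissonKL, log_div hm'.ne' hμ.ne']; ring,
          exp_sub, exp_add, exp_nat_mul, exp_nat_mul, exp_sub, exp_log hμ, exp_log hm']
        field_simp
    _ ≤ μ ^ m * exp (-μ) / m ! := by
        gcongr
        exact Stirling.factorial_le_exp_one_mul_sqrt_mul_pow hm

lemma exists_pos_le_poisson_floor {a c : ℝ} (ha : 0 < a) (hc : 0 < c) :
    ∃ A > 0, ∀ᶠ L in atTop,
      A * exp (-(L * poissonKL a c)) / √L
        ≤ (L * c) ^ ⌊L * a⌋₊ * exp (-(L * c)) / (⌊L * a⌋₊ ! : ℝ) := by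
  set δ := |log (a / c) - 1|
  refine ⟨exp (-δ) / (exp 1 * √a), by positivity, ?_⟩
  filter_upwards [eventually_ge_atTop a⁻¹] with L hL
  have hL0 : 0 < L := (inv_pos.2 ha).trans_le hL
  have hLa : 1 ≤ L * a := by rw [inv_le_iff_one_le_mul₀ ha] at hL; linarith
  set m := ⌊L * a⌋₊
  have hm : m ≠ 0 := (Nat.floor_pos.2 hLa).ne'
  have hm0 : (0 : ℝ) < m := by positivity
  have hm_le : (m : ℝ) ≤ L * a := Nat.floor_le (by positivity)
  have hm_gt : L * a - 1 < m := Nat.sub_one_lt_floor _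
  -- `L * poissonKL a c = poissonKL (L * a) (L * c)`, and `m` is within `1` of `L * a`
  have hKL : poissonKL m (L * c) ≤ L * poissonKL a c + δ := by
    have hlog : log (m / (L * c)) ≤ log (a / c) := by
      rw [← mul_div_mul_left a c hL0.ne']
      exact log_le_log (by positivity) (by gcongr)
    have hround : ((m : ℝ) - L * a) * (log (a / c) - 1) ≤ δ := by
      calc ((m : ℝ) - L * a) * (log (a / c) - 1) ≤ |(m : ℝ) - L * a| * δ := by
            rw [← abs_mul]; exact le_abs_self _
        _ ≤ 1 * δ := by
            gcongr
            exact abs_le.2 ⟨by linarith, by linarith⟩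
        _ = δ := one_mul δ
    rw [poissonKL, poissonKL]
    linarith [mul_le_mul_of_nonneg_left hlog hm0.le]
  have hsqrt : √m ≤ √a * √L := by
    rw [← sqrt_mul ha.le, mul_comm]; exact sqrt_le_sqrt hm_le
  calc exp (-δ) / (exp 1 * √a) * exp (-(L * poissonKL a c)) / √L
      = exp (-(L * poissonKL a c + δ)) / (exp 1 * (√a * √L)) := by
        rw [neg_add, exp_add]; field_simp
    _ ≤ exp (-poissonKL m (L * c)) / (exp 1 * √m) := by gcongr
    _ ≤ _ := exp_neg_poissonKL_div_le (by positivity) hm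

lemma exists_pos_le_mvPoisson_floor {k : ℕ} {a c : Fin k → ℝ} (ha : ∀ i, 0 < a i)
    (hc : ∀ i, 0 < c i) :
    ∃ A > 0, ∀ᶠ L in atTop,
      A * exp (-(L * ∑ i, poissonKL (a i) (c i))) * L ^ (-(k : ℝ) / 2)
        ≤ mvPoisson (fun i => L * c i) (fun i => ⌊L * a i⌋₊) := by
  choose A hA hbound using fun i => exists_pos_le_poisson_floor (ha i) (hc i)
  refine ⟨∏ i, A i, Finset.prod_pos fun i _ => hA i, ?_⟩
  filter_upwards [eventually_all.2 hbound, eventually_gt_atTop 0] with L hL hL0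
  have hpow : L ^ (-(k : ℝ) / 2) = (√L ^ k)⁻¹ := by
    rw [sqrt_eq_rpow, ← rpow_natCast, ← rpow_mul hL0.le, ← rpow_neg hL0.le]
    ring_nf
  calc (∏ i, A i) * exp (-(L * ∑ i, poissonKL (a i) (c i))) * L ^ (-(k : ℝ) / 2)
      = ∏ i, A i * exp (-(L * poissonKL (a i) (c i))) / √L := by
        rw [Finset.prod_div_distrib, Finset.prod_mul_distrib, ← exp_sum, Finset.prod_const,
          Finset.card_univ, Fintype.card_fin, hpow, Finset.mul_sum, ← Finset.sum_neg_distrib,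
          div_eq_mul_inv]
    _ ≤ mvPoisson (fun i => L * c i) (fun i => ⌊L * a i⌋₊) :=
        Finset.prod_le_prod (fun i _ => by have := hA i; positivity) fun i _ => hL i

section Chernoff

variable {ι : Type*} [Fintype ι] {c₁ c₂ : ι → ℝ}

noncomputable def chernoffExponent (c₁ c₂ : ι → ℝ) (t : ℝ) : ℝ :=
  ∑ i, (t * c₁ i + (1 - t) * c₂ i - c₁ i ^ t * c₂ i ^ (1 - t))

/-- The `t`-derivative of `chernoffExponent c₁ c₂`. -/
noncomputable def chernoffSlope (c₁ c₂ : ι → ℝ) (t : ℝ) : ℝ :=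
  ∑ i, (c₁ i - c₂ i - c₁ i ^ t * c₂ i ^ (1 - t) * log (c₁ i / c₂ i))

lemma continuous_rpow_mul_rpow_one_sub {a b : ℝ} (ha : a ≠ 0) (hb : b ≠ 0) :
    Continuous fun t : ℝ => a ^ t * b ^ (1 - t) :=
  (continuous_const_rpow ha).mul ((continuous_const_rpow hb).comp (continuous_sub_left 1))

lemma continuous_chernoffExponent (hc₁ : ∀ i, c₁ i ≠ 0) (hc₂ : ∀ i, c₂ i ≠ 0) :
    Continuous (chernoffExponent c₁ c₂) :=
  continuous_finsetSum _ fun i _ => by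
    have := continuous_rpow_mul_rpow_one_sub (hc₁ i) (hc₂ i)
    fun_prop

lemma continuous_chernoffSlope (hc₁ : ∀ i, c₁ i ≠ 0) (hc₂ : ∀ i, c₂ i ≠ 0) :
    Continuous (chernoffSlope c₁ c₂) :=
  continuous_finsetSum _ fun i _ => by
    have := continuous_rpow_mul_rpow_one_sub (hc₁ i) (hc₂ i)
    fun_prop

lemma chernoffSlope_zero : chernoffSlope c₁ c₂ 0 = ∑ i, poissonKL (c₂ i) (c₁ i) := by
  refine Finset.sum_congr rfl fun i _ => ?_
  rw [poissonKL, ← inv_div, log_inv, rpow_zero, sub_zero, rpow_one]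
  ring

lemma chernoffSlope_one : chernoffSlope c₁ c₂ 1 = -∑ i, poissonKL (c₁ i) (c₂ i) := by
  rw [← Finset.sum_neg_distrib]
  refine Finset.sum_congr rfl fun i _ => ?_
  rw [poissonKL, rpow_one, sub_self, rpow_zero]
  ring

lemma exists_chernoffSlope_eq_zero (hc₁ : ∀ i, 0 < c₁ i) (hc₂ : ∀ i, 0 < c₂ i) :
    ∃ t ∈ Set.Icc (0 : ℝ) 1, chernoffSlope c₁ c₂ t = 0 :=
  intermediate_value_Icc' zero_le_one
    (continuous_chernoffSlope (fun i => (hc₁ i).ne') fun i => (hc₂ i).ne').continuousOn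
    ⟨by rw [chernoffSlope_one, neg_nonpos]
        exact Finset.sum_nonneg fun i _ => poissonKL_nonneg (hc₁ i) (hc₂ i),
      by rw [chernoffSlope_zero]
         exact Finset.sum_nonneg fun i _ => poissonKL_nonneg (hc₂ i) (hc₁ i)⟩

lemma log_rpow_mul_rpow_one_sub {a b : ℝ} (ha : 0 < a) (hb : 0 < b) (t : ℝ) :
    log (a ^ t * b ^ (1 - t)) = t * log a + (1 - t) * log b := by
  rw [log_mul (by positivity) (by positivity), log_rpow ha, log_rpow hb]

lemma sum_poissonKL_rpow_mul_rpow_left (hc₁ : ∀ i, 0 < c₁ i) (hc₂ : ∀ i, 0 < c₂ i) (t : ℝ) :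
    ∑ i, poissonKL (c₁ i ^ t * c₂ i ^ (1 - t)) (c₁ i)
      = chernoffExponent c₁ c₂ t + (1 - t) * chernoffSlope c₁ c₂ t := by
  rw [chernoffExponent, chernoffSlope, Finset.mul_sum, ← Finset.sum_add_distrib]
  refine Finset.sum_congr rfl fun i _ => ?_
  have := hc₁ i; have := hc₂ i
  rw [poissonKL, log_div (by positivity) (by positivity), log_div (by positivity) (by positivity),
    log_rpow_mul_rpow_one_sub (hc₁ i) (hc₂ i)]
  ring

lemma sum_poissonKL_rpow_mul_rpow_right (hc₁ : ∀ i, 0 < c₁ i) (hc₂ : ∀ i, 0 < c₂ i) (t : ℝ) :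
    ∑ i, poissonKL (c₁ i ^ t * c₂ i ^ (1 - t)) (c₂ i)
      = chernoffExponent c₁ c₂ t - t * chernoffSlope c₁ c₂ t := by
  rw [chernoffExponent, chernoffSlope, Finset.mul_sum, ← Finset.sum_sub_distrib]
  refine Finset.sum_congr rfl fun i _ => ?_
  have := hc₁ i; have := hc₂ i
  rw [poissonKL, log_div (by positivity) (by positivity), log_div (by positivity) (by positivity),
    log_rpow_mul_rpow_one_sub (hc₁ i) (hc₂ i)]
  ring

end Chernoff

lemma chernoffExponent_le_Dplus {k : ℕ} {c₁ c₂ : Fin k → ℝ} (hc₁ : ∀ i, c₁ i ≠ 0)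
    (hc₂ : ∀ i, c₂ i ≠ 0) {t : ℝ} (ht : t ∈ Set.Icc (0 : ℝ) 1) :
    chernoffExponent c₁ c₂ t ≤ Dplus c₁ c₂ :=
  le_csSup (isCompact_Icc.image (continuous_chernoffExponent hc₁ hc₂)).bddAbove
    (Set.mem_image_of_mem _ ht)

lemma exists_sum_poissonKL_le_Dplus {k : ℕ} {c₁ c₂ : Fin k → ℝ} (hc₁ : ∀ i, 0 < c₁ i)
    (hc₂ : ∀ i, 0 < c₂ i) :
    ∃ a : Fin k → ℝ, (∀ i, 0 < a i) ∧
      ∑ i, poissonKL (a i) (c₁ i) ≤ Dplus c₁ c₂ ∧ ∑ i, poissonKL (a i) (c₂ i) ≤ Dplus c₁ c₂ := by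
  obtain ⟨t, ht, hslope⟩ := exists_chernoffSlope_eq_zero hc₁ hc₂
  have hD := chernoffExponent_le_Dplus (fun i => (hc₁ i).ne') (fun i => (hc₂ i).ne') ht
  refine ⟨fun i => c₁ i ^ t * c₂ i ^ (1 - t), fun i => by have := hc₁ i; have := hc₂ i; positivity,
    ?_, ?_⟩
  · rwa [sum_poissonKL_rpow_mul_rpow_left hc₁ hc₂, hslope, mul_zero, add_zero]
  · rwa [sum_poissonKL_rpow_mul_rpow_right hc₁ hc₂, hslope, mul_zero, sub_zero]

lemma exists_pos_le_mvPoisson_log_floor {k : ℕ} {a c : Fin k → ℝ} (ha : ∀ i, 0 < a i)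
    (hc : ∀ i, 0 < c i) {D : ℝ} (hD : ∑ i, poissonKL (a i) (c i) ≤ D) :
    ∃ A > 0, ∀ᶠ n : ℕ in atTop,
      A * (n : ℝ) ^ (-D) * log n ^ (-(k : ℝ) / 2)
        ≤ mvPoisson (fun i => log n * c i) (fun i => ⌊log n * a i⌋₊) := by
  obtain ⟨A, hA, hL⟩ := exists_pos_le_mvPoisson_floor ha hc
  refine ⟨A, hA, ?_⟩
  filter_upwards [(tendsto_log_atTop.comp tendsto_natCast_atTop_atTop).eventually hL,
    eventually_gt_atTop 0] with n hn hn0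
  refine le_trans ?_ hn
  have hexp : exp (log n * -D) ≤ exp (-(log n * ∑ i, poissonKL (a i) (c i))) :=
    exp_le_exp.2 (by nlinarith [log_natCast_nonneg n])
  rw [rpow_def_of_pos (by positivity)]
  exact mul_le_mul_of_nonneg_right (mul_le_mul_of_nonneg_left hexp hA.le)
    (rpow_nonneg (log_natCast_nonneg n) _)

lemma summable_pi_prod_of_nonneg {α : Type*} :
    ∀ {k : ℕ} (f : Fin k → α → ℝ), (∀ i, Summable (f i)) → (∀ i x, 0 ≤ f i x) →
      Summable fun x : Fin k → α => ∏ i, f i (x i)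
  | 0, _, _, _ => by simpa using Summable.of_finite
  | k + 1, f, hsum, hnonneg => by
    have htail := summable_pi_prod_of_nonneg (fun i => f i.succ) (fun i => hsum i.succ)
      fun i => hnonneg i.succ
    have hpair := (hsum 0).mul_of_nonneg htail (hnonneg 0) fun x =>
      Finset.prod_nonneg fun i _ => hnonneg i.succ (x i)
    refine ((Fin.consEquiv fun _ => α).symm.summable_iff.2 hpair).congr fun x => ?_
    simp [Fin.prod_univ_succ, Fin.tail]

lemma mvPoisson_nonneg {k : ℕ} {lam : Fin k → ℝ} (hlam : ∀ i, 0 ≤ lam i) (x : Fin k → ℕ) :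
    0 ≤ mvPoisson lam x :=
  Finset.prod_nonneg fun i _ => by have := hlam i; positivity

lemma summable_mvPoisson {k : ℕ} {lam : Fin k → ℝ} (hlam : ∀ i, 0 ≤ lam i) :
    Summable (mvPoisson lam) :=
  summable_pi_prod_of_nonneg (fun i m => lam i ^ m * exp (-lam i) / (m ! : ℝ))
    (fun i => ((summable_pow_div_factorial (lam i)).mul_right (exp (-lam i))).congr fun m => by
      ring)
    fun i m => by have := hlam i; positivity

lemma min_mul_mvPoisson_le_tsum {k : ℕ} {lam₁ lam₂ : Fin k → ℝ} (hlam₁ : ∀ i, 0 ≤ lam₁ i)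
    (hlam₂ : ∀ i, 0 ≤ lam₂ i) {p₁ p₂ : ℝ} (hp₁ : 0 ≤ p₁) (hp₂ : 0 ≤ p₂) (x : Fin k → ℕ) :
    min (mvPoisson lam₁ x * p₁) (mvPoisson lam₂ x * p₂)
      ≤ ∑' y, min (mvPoisson lam₁ y * p₁) (mvPoisson lam₂ y * p₂) := by
  have hnonneg (y : Fin k → ℕ) : 0 ≤ min (mvPoisson lam₁ y * p₁) (mvPoisson lam₂ y * p₂) :=
    le_min (mul_nonneg (mvPoisson_nonneg hlam₁ y) hp₁) (mul_nonneg (mvPoisson_nonneg hlam₂ y) hp₂)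
  exact (((summable_mvPoisson hlam₁).mul_right p₁).of_nonneg_of_le hnonneg
    fun y => min_le_left _ _).le_tsum x fun y _ => hnonneg y

theorem poisson_overlap_lower_bound_general (k : ℕ) (c₁ c₂ : Fin k → ℝ)
    (hc₁ : ∀ i, 0 < c₁ i) (hc₂ : ∀ i, 0 < c₂ i)
    (p₁ p₂ : ℝ) (hp₁ : 0 < p₁) (hp₂ : 0 < p₂) :
    ∃ c : ℝ, 0 < c ∧ ∃ N : ℕ, ∀ n : ℕ, N ≤ n →
      c * (n : ℝ) ^ (-(Dplus c₁ c₂)) * Real.log n ^ (-(k : ℝ)/2)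
        ≤ ∑' x : Fin k → ℕ,
            min (mvPoisson (fun i => Real.log n * c₁ i) x * p₁)
                (mvPoisson (fun i => Real.log n * c₂ i) x * p₂) := by
  obtain ⟨a, ha, hD₁, hD₂⟩ := exists_sum_poissonKL_le_Dplus hc₁ hc₂
  obtain ⟨A₁, hA₁, h₁⟩ := exists_pos_le_mvPoisson_log_floor ha hc₁ hD₁
  obtain ⟨A₂, hA₂, h₂⟩ := exists_pos_le_mvPoisson_log_floor ha hc₂ hD₂
  obtain ⟨N, hN⟩ := eventually_atTop.1 (h₁.and h₂)
  refine ⟨min (A₁ * p₁) (A₂ * p₂), by positivity, N, fun n hn => ?_⟩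
  obtain ⟨b₁, b₂⟩ := hN n hn
  have hmean {c : Fin k → ℝ} (hc : ∀ i, 0 < c i) : ∀ i, 0 ≤ log n * c i :=
    fun i => mul_nonneg (log_natCast_nonneg n) (hc i).le
  calc min (A₁ * p₁) (A₂ * p₂) * (n : ℝ) ^ (-Dplus c₁ c₂) * log n ^ (-(k : ℝ) / 2)
      = min (A₁ * (n : ℝ) ^ (-Dplus c₁ c₂) * log n ^ (-(k : ℝ) / 2) * p₁)
          (A₂ * (n : ℝ) ^ (-Dplus c₁ c₂) * log n ^ (-(k : ℝ) / 2) * p₂) := by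
        rw [mul_assoc, min_mul_of_nonneg _ _ (by positivity)]
        ring_nf
    _ ≤ min (mvPoisson (fun i => log n * c₁ i) (fun i => ⌊log n * a i⌋₊) * p₁)
          (mvPoisson (fun i => log n * c₂ i) (fun i => ⌊log n * a i⌋₊) * p₂) :=
        min_le_min (by gcongr) (by gcongr)
    _ ≤ _ := min_mul_mvPoisson_le_tsum (hmean hc₁) (hmean hc₂) hp₁.le hp₂.le _

/-- Lower bound on the total overlap of two multivariate Poisson distributions with
mean vectors `ln(n)·c₁` and `ln(n)·c₂`:
`∑_x min{𝒫_{ln(n)c₁}(x) p₁, 𝒫_{ln(n)c₂}(x) p₂} ≥ c n^{-D₊(c₁,c₂)} (ln n)^{-k/2}`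
for all sufficiently large `n`. -/
theorem poisson_overlap_lower_bound (k : ℕ) (hk : 0 < k) (c₁ c₂ : Fin k → ℝ)
    (hc₁ : ∀ i, 0 < c₁ i) (hc₂ : ∀ i, 0 < c₂ i) (hne : c₁ ≠ c₂)
    (p₁ p₂ : ℝ) (hp₁ : 0 < p₁) (hp₂ : 0 < p₂) :
    ∃ c : ℝ, 0 < c ∧ ∃ N : ℕ, ∀ n : ℕ, N ≤ n →
      c * (n : ℝ) ^ (-(Dplus c₁ c₂)) * Real.log n ^ (-(k : ℝ)/2)
        ≤ ∑' x : Fin k → ℕ,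
            min (mvPoisson (fun i => Real.log n * c₁ i) x * p₁)
                (mvPoisson (fun i => Real.log n * c₂ i) x * p₂) :=
  poisson_overlap_lower_bound_general k c₁ c₂ hc₁ hc₂ p₁ p₂ hp₁ hp₂
end

section
/- In the Bayesian k-ary hypothesis testing problem, the error probability P_e of the maximum a posteriori rule satisfies (1/(k−1)) ∑_{i<j} P_e(i,j) ≤ P_e ≤ ∑_{i<j} P_e(i,j). -/
/-!
Fix an observation `x`, put `f j = p j * P j x`, `S = ∑ j, f j`, and let `m` maximise `f`.
The terms `min (f m) (f j) = f j`, `j ≠ m`, appear in the pairwise sum, so `S - f m` is at most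
the pairwise sum. Conversely, twice the pairwise sum is `∑ i, ∑ j ≠ i, min (f i) (f j)`; the row
`i = m` equals `S - f m` and every other row `i` is at most `(k - 1) * f i`, so twice the pairwise
sum is at most `k * (S - f m) ≤ 2 * (k - 1) * (S - f m)`. Summing over `x`, `∑' x, S = 1` turns
`∑' x, (S - f m)` into the MAP error.
-/

open Finset

section Pointwise

variable {ι : Type*} [Fintype ι] [LinearOrder ι]

theorem sum_sum_erase_eq_two_nsmul_sum_lt {M : Type*} [AddCommMonoid M] (h : ι → ι → M)
    (hh : ∀ i j, h i j = h j i) :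
    ∑ i, ∑ j ∈ univ.erase i, h i j =
      2 • ∑ q ∈ univ.filter (fun q : ι × ι => q.1 < q.2), h q.1 q.2 := by
  have hsplit : ∀ i, ∑ j ∈ univ.erase i, h i j =
      ∑ j, ((if i < j then h i j else 0) + if j < i then h j i else 0) := by
    intro i
    rw [← filter_ne', sum_filter]
    refine sum_congr rfl fun j _ => ?_
    rcases lt_trichotomy i j with hij | rfl | hji
    · simp [hij, hij.ne', hij.not_gt]
    · simp
    · simp [hji, hji.ne, hji.not_gt, hh i j]
  simp only [hsplit, sum_add_distrib, sum_filter, Fintype.sum_prod_type, two_nsmul]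
  rw [sum_comm (f := fun i j => if j < i then h j i else 0)]

variable {f : ι → ℝ} {m : ι}

theorem sum_erase_min_eq_sum_sub (hm : ∀ j, f j ≤ f m) :
    ∑ j ∈ univ.erase m, min (f m) (f j) = ∑ j, f j - f m := by
  rw [← sum_erase_eq_sub (mem_univ m)]
  exact sum_congr rfl fun j _ => min_eq_right (hm j)

theorem sum_sub_le_sum_min (hf : ∀ i, 0 ≤ f i) (hm : ∀ j, f j ≤ f m) :
    ∑ j, f j - f m ≤ ∑ q ∈ univ.filter (fun q : ι × ι => q.1 < q.2), min (f q.1) (f q.2) := by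
  have key := sum_sum_erase_eq_two_nsmul_sum_lt (fun i j => min (f i) (f j))
    fun _ _ => min_comm _ _
  have hrest : ∑ j, f j - f m ≤ ∑ i ∈ univ.erase m, ∑ j ∈ univ.erase i, min (f i) (f j) := by
    rw [← sum_erase_eq_sub (mem_univ m)]
    refine sum_le_sum fun i hi => ?_
    calc f i = min (f i) (f m) := (min_eq_left (hm i)).symm
      _ ≤ ∑ j ∈ univ.erase i, min (f i) (f j) :=
        single_le_sum (f := fun j => min (f i) (f j)) (fun j _ => le_min (hf i) (hf j))
          (mem_erase.2 ⟨(ne_of_mem_erase hi).symm, mem_univ m⟩)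
  rw [← add_sum_erase _ _ (mem_univ m), sum_erase_min_eq_sum_sub hm, two_nsmul] at key
  linarith

theorem two_mul_sum_min_le (hm : ∀ j, f j ≤ f m) :
    2 * ∑ q ∈ univ.filter (fun q : ι × ι => q.1 < q.2), min (f q.1) (f q.2) ≤
      Fintype.card ι * (∑ j, f j - f m) := by
  have key := sum_sum_erase_eq_two_nsmul_sum_lt (fun i j => min (f i) (f j))
    fun _ _ => min_comm _ _
  have hcard : ((univ.erase m).card : ℝ) = Fintype.card ι - 1 := by
    rw [card_erase_of_mem (mem_univ m), card_univ,
      Nat.cast_pred (Fintype.card_pos_iff.2 ⟨m⟩)]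
  have hrest : ∑ i ∈ univ.erase m, ∑ j ∈ univ.erase i, min (f i) (f j) ≤
      (Fintype.card ι - 1) * (∑ j, f j - f m) := by
    rw [← sum_erase_eq_sub (mem_univ m), mul_sum]
    refine sum_le_sum fun i _ => ?_
    calc ∑ j ∈ univ.erase i, min (f i) (f j) ≤ ∑ _j ∈ univ.erase i, f i :=
          sum_le_sum fun j _ => min_le_left _ _
      _ = (Fintype.card ι - 1) * f i := by
          rw [sum_const, nsmul_eq_mul, ← hcard, card_erase_of_mem (mem_univ i),
            card_erase_of_mem (mem_univ m)]
  rw [← add_sum_erase _ _ (mem_univ m), sum_erase_min_eq_sum_sub hm, two_nsmul] at key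
  linarith

end Pointwise

theorem exists_forall_le_and_ciSup_eq {ι α : Type*} [ConditionallyCompleteLinearOrder α]
    [Finite ι] [Nonempty ι] (f : ι → α) : ∃ m, (∀ j, f j ≤ f m) ∧ ⨆ j, f j = f m := by
  obtain ⟨m, hm⟩ := exists_eq_ciSup_of_finite (f := f)
  exact ⟨m, fun j => hm ▸ le_ciSup (Finite.bddAbove_range f) j, hm.symm⟩

section Summed

variable {ι α : Type*} {F : ι → α → ℝ}

theorem summable_min (hF0 : ∀ i x, 0 ≤ F i x) (hF : ∀ i, Summable (F i)) (i j : ι) :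
    Summable fun x => min (F i x) (F j x) :=
  (hF i).of_nonneg_of_le (fun x => le_min (hF0 i x) (hF0 j x)) fun _ => min_le_left _ _

variable [Fintype ι]

section Sup

theorem summable_ciSup (hF0 : ∀ i x, 0 ≤ F i x) (hF : ∀ i, Summable (F i)) :
    Summable fun x => ⨆ i, F i x :=
  (summable_sum fun i _ => hF i).of_nonneg_of_le (fun x => Real.iSup_nonneg (hF0 · x))
    fun x => Real.iSup_le (fun j => single_le_sum (fun i _ => hF0 i x) (mem_univ j))
      (sum_nonneg fun i _ => hF0 i x)

theorem summable_sum_sub_ciSup (hF0 : ∀ i x, 0 ≤ F i x) (hF : ∀ i, Summable (F i)) :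
    Summable fun x => ∑ i, F i x - ⨆ i, F i x :=
  (summable_sum fun i _ => hF i).sub (summable_ciSup hF0 hF)

theorem tsum_sum_sub_tsum_ciSup (hF0 : ∀ i x, 0 ≤ F i x) (hF : ∀ i, Summable (F i)) :
    ∑' x, ∑ i, F i x - ∑' x, ⨆ i, F i x = ∑' x, (∑ i, F i x - ⨆ i, F i x) :=
  ((summable_sum fun i _ => hF i).tsum_sub (summable_ciSup hF0 hF)).symm

end Sup

variable [LinearOrder ι]

theorem summable_sum_min (hF0 : ∀ i x, 0 ≤ F i x) (hF : ∀ i, Summable (F i)) :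
    Summable fun x => ∑ q ∈ univ.filter (fun q : ι × ι => q.1 < q.2), min (F q.1 x) (F q.2 x) :=
  summable_sum fun q _ => summable_min hF0 hF q.1 q.2

theorem sum_tsum_min (hF0 : ∀ i x, 0 ≤ F i x) (hF : ∀ i, Summable (F i)) :
    ∑ q ∈ univ.filter (fun q : ι × ι => q.1 < q.2), ∑' x, min (F q.1 x) (F q.2 x) =
      ∑' x, ∑ q ∈ univ.filter (fun q : ι × ι => q.1 < q.2), min (F q.1 x) (F q.2 x) :=
  (Summable.tsum_finsetSum fun q _ => summable_min hF0 hF q.1 q.2).symm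

variable [Nonempty ι]

theorem tsum_sum_sub_tsum_ciSup_le (hF0 : ∀ i x, 0 ≤ F i x) (hF : ∀ i, Summable (F i)) :
    ∑' x, ∑ i, F i x - ∑' x, ⨆ i, F i x ≤
      ∑ q ∈ univ.filter (fun q : ι × ι => q.1 < q.2), ∑' x, min (F q.1 x) (F q.2 x) := by
  rw [tsum_sum_sub_tsum_ciSup hF0 hF, sum_tsum_min hF0 hF]
  refine (summable_sum_sub_ciSup hF0 hF).tsum_le_tsum (fun x => ?_) (summable_sum_min hF0 hF)
  obtain ⟨m, hm, hsup⟩ := exists_forall_le_and_ciSup_eq (F · x)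
  rw [hsup]
  exact sum_sub_le_sum_min (fun i => hF0 i x) hm

theorem two_mul_sum_tsum_min_le (hF0 : ∀ i x, 0 ≤ F i x) (hF : ∀ i, Summable (F i)) :
    2 * ∑ q ∈ univ.filter (fun q : ι × ι => q.1 < q.2), ∑' x, min (F q.1 x) (F q.2 x) ≤
      Fintype.card ι * (∑' x, ∑ i, F i x - ∑' x, ⨆ i, F i x) := by
  rw [tsum_sum_sub_tsum_ciSup hF0 hF, sum_tsum_min hF0 hF,
    ← (summable_sum_min hF0 hF).tsum_mul_left, ← (summable_sum_sub_ciSup hF0 hF).tsum_mul_left]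
  refine ((summable_sum_min hF0 hF).mul_left 2).tsum_le_tsum (fun x => ?_)
    ((summable_sum_sub_ciSup hF0 hF).mul_left _)
  obtain ⟨m, hm, hsup⟩ := exists_forall_le_and_ciSup_eq (F · x)
  rw [hsup]
  exact two_mul_sum_min_le hm

end Summed

theorem map_error_pairwise_bounds_general (k : ℕ) (hk : 2 ≤ k) (𝒳 : Type*)
    (p : Fin k → ℝ) (hp0 : ∀ j, 0 ≤ p j) (hp1 : ∑ j, p j = 1)
    (P : Fin k → 𝒳 → ℝ) (hP0 : ∀ j x, 0 ≤ P j x) (hP1 : ∀ j, ∑' x, P j x = 1) :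
    (1 / ((k : ℝ) - 1)) *
        (∑ q ∈ Finset.univ.filter (fun q : Fin k × Fin k => q.1 < q.2),
          ∑' x, min (p q.1 * P q.1 x) (p q.2 * P q.2 x))
      ≤ 1 - ∑' x, ⨆ j, p j * P j x ∧
    1 - ∑' x, ⨆ j, p j * P j x
      ≤ ∑ q ∈ Finset.univ.filter (fun q : Fin k × Fin k => q.1 < q.2),
          ∑' x, min (p q.1 * P q.1 x) (p q.2 * P q.2 x) := by
  have : NeZero k := ⟨by omega⟩
  have hF0 : ∀ j x, 0 ≤ p j * P j x := fun j x => mul_nonneg (hp0 j) (hP0 j x)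
  have hP : ∀ j, Summable (P j) := fun j => by
    by_contra h
    simpa [tsum_eq_zero_of_not_summable h] using hP1 j
  have hF : ∀ j, Summable fun x => p j * P j x := fun j => (hP j).mul_left (p j)
  have htotal : ∑' x, ∑ j, p j * P j x = 1 := by
    rw [Summable.tsum_finsetSum fun j _ => hF j]
    simp only [tsum_mul_left, hP1, mul_one, hp1]
  have hupper := tsum_sum_sub_tsum_ciSup_le hF0 hF
  have hlower := two_mul_sum_tsum_min_le hF0 hF
  rw [htotal] at hupper hlower
  rw [Fintype.card_fin] at hlower
  have hpairs : 0 ≤ ∑ q ∈ univ.filter (fun q : Fin k × Fin k => q.1 < q.2),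
      ∑' x, min (p q.1 * P q.1 x) (p q.2 * P q.2 x) :=
    sum_nonneg fun q _ => tsum_nonneg fun x => le_min (hF0 _ x) (hF0 _ x)
  have hk1 : (1 : ℝ) ≤ k - 1 := by
    have : (2 : ℝ) ≤ k := by exact_mod_cast hk
    linarith
  refine ⟨?_, hupper⟩
  rw [one_div_mul_eq_div, div_le_iff₀ (by linarith)]
  nlinarith

/-- In the Bayesian `k`-ary hypothesis testing problem with prior `p` and conditional
pmfs `P j` on a countable observation space `𝒳`, the error probability
`P_e = 1 - ∑_x max_j p_j P_j(x)` of the MAP rule satisfies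
`(1/(k-1)) ∑_{i<j} P_e(i,j) ≤ P_e ≤ ∑_{i<j} P_e(i,j)`, where
`P_e(i,j) = ∑_x min{p_i P_i(x), p_j P_j(x)}`. -/
theorem map_error_pairwise_bounds (k : ℕ) (hk : 2 ≤ k) (𝒳 : Type*) [Countable 𝒳]
    (p : Fin k → ℝ) (hp0 : ∀ j, 0 ≤ p j) (hp1 : ∑ j, p j = 1)
    (P : Fin k → 𝒳 → ℝ) (hP0 : ∀ j x, 0 ≤ P j x) (hP1 : ∀ j, ∑' x, P j x = 1) :
    (1 / ((k : ℝ) - 1)) *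
        (∑ q ∈ Finset.univ.filter (fun q : Fin k × Fin k => q.1 < q.2),
          ∑' x, min (p q.1 * P q.1 x) (p q.2 * P q.2 x))
      ≤ 1 - ∑' x, ⨆ j, p j * P j x ∧
    1 - ∑' x, ⨆ j, p j * P j x
      ≤ ∑ q ∈ Finset.univ.filter (fun q : Fin k × Fin k => q.1 < q.2),
          ∑' x, min (p q.1 * P q.1 x) (p q.2 * P q.2 x) :=
  map_error_pairwise_bounds_general k hk 𝒳 p hp0 hp1 P hP0 hP1
end

section
/- Let k ≥ 2 and a, b > 0. Consider the symmetric stochastic block model parameters p_i = 1/k for all i ∈ [k], Q_{i,j} = a if i = j and Q_{i,j} = b if i ≠ j, and P = diag(p), so that the j-th community profile (PQ)_j ∈ (0,∞)^k has entry a/k in coordinate j and b/k in every other coordinate. Then for every i ≠ j, D₊((PQ)_i, (PQ)_j) = (√a − √b)²/k; consequently min_{i≠j} D₊((PQ)_i,(PQ)_j) ≥ 1 if and only if |√a − √b| ≥ √k. -/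
open scoped BigOperators

/-- The `j`-th community profile `(PQ)_j` in the symmetric stochastic block model with `k`
communities, within-community probability `a` and between-community probability `b`:
entry `a/k` in coordinate `j` and `b/k` elsewhere. -/
noncomputable def communityProfile (k : ℕ) (a b : ℝ) (j : Fin k) : Fin k → ℝ :=
  fun i => if i = j then a / k else b / k

/-!
Profile `j` is profile `i` with coordinates `i` and `j` swapped. Coordinates fixed by the swap
contribute nothing to the Chernoff–Hellinger sum, and the two swapped ones contribute
`x + y - (x^t y^(1-t) + y^t x^(1-t))`. The two subtracted terms have product `x y`, so by AM–GM
they sum to at least `2√(xy)`, with equality at `t = 1/2`; hence `D₊ = (√x - √y)²`.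
-/

open Real

lemma rpow_mul_rpow_one_sub_self {c : ℝ} (hc : 0 < c) (t : ℝ) : c ^ t * c ^ (1 - t) = c := by
  rw [← rpow_add hc, add_sub_cancel, rpow_one]

lemma two_sqrt_mul_le_rpow_mul_rpow_add {x y : ℝ} (hx : 0 < x) (hy : 0 < y) (t : ℝ) :
    2 * √(x * y) ≤ x ^ t * y ^ (1 - t) + y ^ t * x ^ (1 - t) := by
  set u := x ^ t * y ^ (1 - t)
  set v := y ^ t * x ^ (1 - t)
  have huv : u * v = x * y := by
    calc u * v = (x ^ t * x ^ (1 - t)) * (y ^ t * y ^ (1 - t)) := by ring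
      _ = x * y := by rw [rpow_mul_rpow_one_sub_self hx, rpow_mul_rpow_one_sub_self hy]
  have hu : 0 ≤ u := by positivity
  have hv : 0 ≤ v := by positivity
  rw [← huv, sqrt_mul hu]
  nlinarith [sq_nonneg (√u - √v), sq_sqrt hu, sq_sqrt hv]

lemma sum_chernoff_comp_swap {k : ℕ} {c : Fin k → ℝ} (hc : ∀ m, 0 < c m) {i j : Fin k}
    (hij : i ≠ j) (t : ℝ) :
    ∑ m, (t * c m + (1 - t) * c (Equiv.swap i j m) - c m ^ t * c (Equiv.swap i j m) ^ (1 - t))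
      = c i + c j - (c i ^ t * c j ^ (1 - t) + c j ^ t * c i ^ (1 - t)) := by
  rw [Finset.sum_eq_add_of_mem i j (Finset.mem_univ i) (Finset.mem_univ j) hij]
  · simp only [Equiv.swap_apply_left, Equiv.swap_apply_right]
    ring
  · rintro m - ⟨hmi, hmj⟩
    rw [Equiv.swap_apply_of_ne_of_ne hmi hmj, rpow_mul_rpow_one_sub_self (hc m)]
    ring

theorem Dplus_comp_swap {k : ℕ} {c : Fin k → ℝ} (hc : ∀ m, 0 < c m) {i j : Fin k}
    (hij : i ≠ j) : Dplus c (c ∘ Equiv.swap i j) = (√(c i) - √(c j)) ^ 2 := by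
  have hsq : (√(c i) - √(c j)) ^ 2 = c i + c j - 2 * √(c i * c j) := by
    rw [sub_sq, sq_sqrt (hc i).le, sq_sqrt (hc j).le, sqrt_mul (hc i).le]
    ring
  refine IsGreatest.csSup_eq ⟨⟨1 / 2, by norm_num, ?_⟩, ?_⟩
  · dsimp only [Function.comp_apply]
    rw [sum_chernoff_comp_swap hc hij, hsq, sqrt_mul (hc i).le,
      sqrt_eq_rpow, sqrt_eq_rpow, show (1 : ℝ) - 1 / 2 = 1 / 2 by norm_num]
    ring
  · rintro _ ⟨t, -, rfl⟩
    dsimp only [Function.comp_apply]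
    rw [sum_chernoff_comp_swap hc hij, hsq]
    linarith [two_sqrt_mul_le_rpow_mul_rpow_add (hc i) (hc j) t]

lemma communityProfile_comp_swap (k : ℕ) (a b : ℝ) (i j : Fin k) :
    communityProfile k a b i ∘ Equiv.swap i j = communityProfile k a b j := by
  ext m
  simp only [Function.comp_apply, communityProfile, Equiv.swap_apply_eq_iff,
    Equiv.swap_apply_left]

theorem Dplus_communityProfile {k : ℕ} {a b : ℝ} (ha : 0 < a) (hb : 0 < b) {i j : Fin k}
    (hij : i ≠ j) :
    Dplus (communityProfile k a b i) (communityProfile k a b j) = (√a - √b) ^ 2 / k := by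
  have hk : (0 : ℝ) < k := by exact_mod_cast i.pos
  have hpos : ∀ m, 0 < communityProfile k a b i m := fun m => by
    unfold communityProfile; split_ifs <;> positivity
  rw [← communityProfile_comp_swap k a b i j, Dplus_comp_swap hpos hij]
  have hii : communityProfile k a b i i = a / k := if_pos rfl
  have hji : communityProfile k a b i j = b / k := if_neg hij.symm
  rw [hii, hji, sqrt_div' _ hk.le, sqrt_div' _ hk.le, ← sub_div, div_pow, sq_sqrt hk.le]

lemma one_le_sq_div_iff_sqrt_le_abs {s x : ℝ} (hx : 0 < x) :
    1 ≤ s ^ 2 / x ↔ √x ≤ |s| := by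
  rw [one_le_div hx, ← sqrt_sq_eq_abs, sqrt_le_sqrt_iff (sq_nonneg s)]

/-- In the symmetric SBM with `k` communities, for all `i ≠ j` the CH-divergence of the
community profiles equals `(√a - √b)²/k`; consequently
`min_{i≠j} D₊((PQ)_i,(PQ)_j) ≥ 1` if and only if `|√a - √b| ≥ √k`. -/
theorem symmetric_sbm_chernoff_hellinger (k : ℕ) (hk : 2 ≤ k) (a b : ℝ)
    (ha : 0 < a) (hb : 0 < b) :
    (∀ i j : Fin k, i ≠ j →
      Dplus (communityProfile k a b i) (communityProfile k a b j)
        = (Real.sqrt a - Real.sqrt b) ^ 2 / k) ∧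
    ((∀ i j : Fin k, i ≠ j →
        1 ≤ Dplus (communityProfile k a b i) (communityProfile k a b j)) ↔
      Real.sqrt k ≤ |Real.sqrt a - Real.sqrt b|) := by
  have hk0 : (0 : ℝ) < k := by positivity
  have h01 : (⟨0, by omega⟩ : Fin k) ≠ ⟨1, by omega⟩ := by simp
  have hD : ∀ i j : Fin k, i ≠ j → Dplus (communityProfile k a b i) (communityProfile k a b j)
      = (√a - √b) ^ 2 / k := fun _ _ => Dplus_communityProfile ha hb
  refine ⟨hD, ?_⟩
  rw [← one_le_sq_div_iff_sqrt_le_abs hk0]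
  exact ⟨fun h => hD _ _ h01 ▸ h _ _ h01, fun h i j hij => hD i j hij ▸ h⟩
end
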